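/- Suppose s ≤ d. If γ1 < 0, then the zero solution is stable: for every ε ∈ (0,d0] there exist δ > 0 and t1 ≥ t0 such that every admissible solution with v(t1) ≤ δ satisfies v(t) ≤ ε for all t ≥ t1. If γ1 > 0 and m ≤ q, then the zero solution is unstable: there exist ε > 0 and t1 ≥ t0 such that for every δ ∈ (0,ε), every admissible solution with v(t1) = δ satisfies v(t) ≥ ε for some t ≥ t1. -/

import Mathlib

/-! For large `t` and small `v`, both `γ2·t^{−n/q}·v^d` and `ρ` are bounded by an arbitrarily
small multiple of the principal term `t^{−m/q}·v^s`, since `s ≤ d` and `t^{−(n−m)/q}`,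
`t^{−1/q} → 0`. Hence `v'` has the sign of `γ1` wherever `0 < v ≤ η`. If `γ1 < 0`, the level `η`
is a barrier that `v` cannot cross from below. If `γ1 > 0` and `v` stayed below `η`, the level
`δ = v(t1)` would be a barrier from above, so `v' ≥ c·t^{−m/q} ≥ c/t` (as `m ≤ q`) and `v` would
grow like `c·log t`, leaving `[0, d0]`. -/

/-- An admissible solution of the reduced equation
`v'(t) = γ1·t^{−m/q}·v(t)^s + γ2·t^{−n/q}·v(t)^d + ρ(t)` on `[t0,∞)` with values
in `[0,d0]`, where
`|ρ(t)| ≤ M·(t^{−m/q}·v(t)^s + t^{−n/q}·v(t)^d)·(v(t) + t^{−1/q})`. -/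
def IsAdmissible2 (q m n s d : ℕ) (γ1 γ2 d0 t0 M : ℝ) (v : ℝ → ℝ) : Prop :=
  (∀ t ≥ t0, v t ∈ Set.Icc (0:ℝ) d0) ∧
  ∃ ρ : ℝ → ℝ,
    (∀ t ≥ t0, |ρ t| ≤
      M * (t ^ (-(m:ℝ)/(q:ℝ)) * v t ^ s + t ^ (-(n:ℝ)/(q:ℝ)) * v t ^ d)
        * (v t + t ^ (-(1:ℝ)/(q:ℝ)))) ∧
    (∀ t ≥ t0, HasDerivAt v
      (γ1 * t ^ (-(m:ℝ)/(q:ℝ)) * v t ^ s + γ2 * t ^ (-(n:ℝ)/(q:ℝ)) * v t ^ d + ρ t) t)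

open Filter Real Set Topology

theorem image_le_of_deriv_neg_of_eq {v : ℝ → ℝ} {t₁ a : ℝ}
    (hv : ∀ t ≥ t₁, DifferentiableAt ℝ v t) (h : ∀ t ≥ t₁, v t = a → deriv v t < 0)
    (h₁ : v t₁ ≤ a) {t : ℝ} (ht : t₁ ≤ t) : v t ≤ a :=
  image_le_of_deriv_right_lt_deriv_boundary (B' := fun _ => 0)
    (fun x hx => (hv x hx.1).continuousAt.continuousWithinAt)
    (fun x hx => (hv x hx.1).hasDerivAt.hasDerivWithinAt) h₁ (fun _ => hasDerivAt_const _ _)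
    (fun x hx => h x hx.1) ⟨ht, le_rfl⟩

theorem le_image_of_deriv_pos_of_eq {v : ℝ → ℝ} {t₁ a : ℝ}
    (hv : ∀ t ≥ t₁, DifferentiableAt ℝ v t) (h : ∀ t ≥ t₁, v t = a → 0 < deriv v t)
    (h₁ : a ≤ v t₁) {t : ℝ} (ht : t₁ ≤ t) : a ≤ v t :=
  image_le_of_deriv_right_lt_deriv_boundary' (f' := fun _ => 0) continuousOn_const
    (fun _ _ => hasDerivWithinAt_const _ _ _) h₁
    (fun x hx => (hv x hx.1).continuousAt.continuousWithinAt)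
    (fun x hx => (hv x hx.1).hasDerivAt.hasDerivWithinAt) (fun x hx hx' => h x hx.1 hx'.symm)
    ⟨ht, le_rfl⟩

theorem tendsto_atTop_of_div_le_deriv {v : ℝ → ℝ} {c t₁ : ℝ} (hc : 0 < c) (ht₁ : 0 < t₁)
    (hv : ∀ t ≥ t₁, DifferentiableAt ℝ v t) (h : ∀ t ≥ t₁, c / t ≤ deriv v t) :
    Tendsto v atTop atTop := by
  have hderiv : ∀ t ≥ t₁, HasDerivAt (fun x => v x - c * log x) (deriv v t - c * t⁻¹) t :=
    fun t ht => (hv t ht).hasDerivAt.sub ((hasDerivAt_log (by linarith)).const_mul c)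
  have hmono : MonotoneOn (fun x => v x - c * log x) (Ici t₁) := by
    refine monotoneOn_of_deriv_nonneg (convex_Ici _)
      (fun t ht => (hderiv t ht).continuousAt.continuousWithinAt) ?_ ?_ <;>
      rw [interior_Ici]
    · exact fun t ht => (hderiv t ht.le).differentiableAt.differentiableWithinAt
    · intro t ht
      rw [(hderiv t ht.le).deriv, ← div_eq_mul_inv, sub_nonneg]
      exact h t ht.le
  have hlower : ∀ᶠ t in atTop, v t₁ - c * log t₁ + c * log t ≤ v t := by
    filter_upwards [eventually_ge_atTop t₁] with t ht
    linarith [hmono self_mem_Ici ht ht]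
  refine tendsto_atTop_mono' _ hlower (tendsto_atTop_add_const_left _ _ ?_)
  exact tendsto_log_atTop.const_mul_atTop hc

theorem eventually_rpow_le_mul_rpow {α β η : ℝ} (hαβ : α < β) (hη : 0 < η) :
    ∀ᶠ t in atTop, t ^ α ≤ η * t ^ β := by
  have hlim : Tendsto (fun t : ℝ => t ^ (-(β - α))) atTop (𝓝 0) :=
    tendsto_rpow_neg_atTop (by linarith)
  filter_upwards [hlim.eventually_le_const hη, eventually_gt_atTop 0] with t ht ht0
  calc t ^ α = t ^ (-(β - α)) * t ^ β := by rw [← rpow_add ht0]; ring_nf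
    _ ≤ η * t ^ β := by gcongr

theorem abs_perturbation_le {a b r u η M γ ρ : ℝ} {s d : ℕ} (hsd : s ≤ d) (ha : 0 ≤ a)
    (hb : 0 ≤ b) (hba : b ≤ η * a) (hu : 0 ≤ u) (huη : u ≤ η) (hη : η ≤ 1) (hr : 0 ≤ r)
    (hrη : r ≤ η) (hM : 0 ≤ M) (hρ : |ρ| ≤ M * (a * u ^ s + b * u ^ d) * (u + r)) :
    |γ * b * u ^ d + ρ| ≤ (|γ| + 4 * M) * η * (a * u ^ s) := by
  have hX : 0 ≤ a * u ^ s := by positivity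
  have hbu : b * u ^ d ≤ η * (a * u ^ s) :=
    calc b * u ^ d ≤ b * u ^ s :=
          mul_le_mul_of_nonneg_left (pow_le_pow_of_le_one hu (huη.trans hη) hsd) hb
      _ ≤ η * a * u ^ s := by gcongr
      _ = η * (a * u ^ s) := by ring
  have hηX : η * (a * u ^ s) ≤ a * u ^ s := mul_le_of_le_one_left hX hη
  have hρ' : |ρ| ≤ 4 * M * η * (a * u ^ s) :=
    calc |ρ| ≤ M * (a * u ^ s + b * u ^ d) * (u + r) := hρ
      _ ≤ M * (2 * (a * u ^ s)) * (2 * η) := by gcongr <;> linarith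
      _ = 4 * M * η * (a * u ^ s) := by ring
  have hγ : |γ * b * u ^ d| ≤ |γ| * η * (a * u ^ s) := by
    rw [mul_assoc, abs_mul, abs_of_nonneg (by positivity : 0 ≤ b * u ^ d), mul_assoc]
    gcongr
  calc |γ * b * u ^ d + ρ| ≤ |γ * b * u ^ d| + |ρ| := abs_add_le _ _
    _ ≤ (|γ| + 4 * M) * η * (a * u ^ s) := by linarith

section Admissible

variable {q m n s d : ℕ} {γ1 γ2 d0 t0 M : ℝ} {v : ℝ → ℝ}

theorem IsAdmissible2.differentiableAt (hv : IsAdmissible2 q m n s d γ1 γ2 d0 t0 M v) {t : ℝ}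
    (ht : t0 ≤ t) : DifferentiableAt ℝ v t :=
  (hv.2.choose_spec.2 t ht).differentiableAt

theorem exists_eventually_abs_deriv_sub_principal_le (hq : 0 < q) (hmn : m < n) (hsd : s ≤ d)
    (hM : 0 ≤ M) {κ : ℝ} (hκ : 0 < κ) :
    ∃ η > 0, ∀ᶠ t in atTop, ∀ v, IsAdmissible2 q m n s d γ1 γ2 d0 t0 M v → v t ≤ η →
      |deriv v t - γ1 * (t ^ (-(m:ℝ)/(q:ℝ)) * v t ^ s)| ≤ κ * (t ^ (-(m:ℝ)/(q:ℝ)) * v t ^ s) := by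
  set C := |γ2| + 4 * M
  have hC : 0 < C + 1 := by positivity
  set η := min 1 (κ / (C + 1))
  have hη0 : 0 < η := lt_min one_pos (div_pos hκ hC)
  have hCη : C * η ≤ κ :=
    calc C * η ≤ (C + 1) * η := by gcongr; linarith
      _ ≤ (C + 1) * (κ / (C + 1)) := by gcongr; exact min_le_right _ _
      _ = κ := mul_div_cancel₀ _ hC.ne'
  have hqR : (0:ℝ) < q := by exact_mod_cast hq
  have hnm : -(n:ℝ)/q < -(m:ℝ)/q := by
    have : (m:ℝ) < n := by exact_mod_cast hmn
    gcongr
  refine ⟨η, hη0, ?_⟩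
  filter_upwards [eventually_rpow_le_mul_rpow hnm hη0,
    eventually_rpow_le_mul_rpow (div_neg_of_neg_of_pos neg_one_lt_zero hqR) hη0,
    eventually_ge_atTop t0, eventually_ge_atTop 0] with t hba hr ht0 ht
  rintro v ⟨hrange, ρ, hρ, hderiv⟩ hvη
  rw [rpow_zero, mul_one] at hr
  have hvt := (hrange t ht0).1
  have hperturb := abs_perturbation_le (γ := γ2) hsd (rpow_nonneg ht _) (rpow_nonneg ht _) hba
    hvt hvη (min_le_left _ _) (rpow_nonneg ht _) hr hM (hρ t ht0)
  rw [(hderiv t ht0).deriv]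
  calc _ = |γ2 * t ^ (-(n:ℝ)/(q:ℝ)) * v t ^ d + ρ t| := by ring_nf
    _ ≤ C * η * (t ^ (-(m:ℝ)/(q:ℝ)) * v t ^ s) := hperturb
    _ ≤ κ * (t ^ (-(m:ℝ)/(q:ℝ)) * v t ^ s) := by gcongr

theorem isAdmissible2_stable_of_neg (hq : 0 < q) (hmn : m < n) (hsd : s ≤ d) (hM : 0 ≤ M)
    (hγ1 : γ1 < 0) :
    ∀ ε > 0, ∃ δ > 0, ∃ t1 ≥ t0, ∀ v, IsAdmissible2 q m n s d γ1 γ2 d0 t0 M v → v t1 ≤ δ →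
      ∀ t ≥ t1, v t ≤ ε := by
  intro ε hε
  obtain ⟨η, hη0, hev⟩ :=
    exists_eventually_abs_deriv_sub_principal_le (γ1 := γ1) (γ2 := γ2) (d0 := d0) (t0 := t0)
      hq hmn hsd hM (κ := -γ1 / 2) (by linarith)
  obtain ⟨t1, ht1⟩ :=
    (hev.and ((eventually_ge_atTop t0).and (eventually_gt_atTop 0))).exists_forall_of_atTop
  refine ⟨min η ε, lt_min hη0 hε, t1, (ht1 t1 le_rfl).2.1, fun v hv hv1 t ht => ?_⟩
  have hdiff : ∀ t ≥ t1, DifferentiableAt ℝ v t := fun t ht => hv.differentiableAt (ht1 t ht).2.1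
  refine (image_le_of_deriv_neg_of_eq hdiff ?_ hv1 ht).trans (min_le_right _ _)
  intro t ht hvt
  obtain ⟨happrox, -, htpos⟩ := ht1 t ht
  have hX : 0 < t ^ (-(m:ℝ)/(q:ℝ)) * v t ^ s := by
    have : 0 < v t := hvt ▸ lt_min hη0 hε
    positivity
  linarith [(abs_le.1 (happrox v hv (hvt.trans_le (min_le_left _ _)))).2,
    mul_neg_of_neg_of_pos hγ1 hX]

theorem isAdmissible2_unstable_of_pos (hq : 0 < q) (hmn : m < n) (hsd : s ≤ d) (hM : 0 ≤ M)
    (hγ1 : 0 < γ1) (hmq : m ≤ q) :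
    ∃ ε > 0, ∃ t1 ≥ t0, ∀ δ ∈ Ioo 0 ε, ∀ v, IsAdmissible2 q m n s d γ1 γ2 d0 t0 M v →
      v t1 = δ → ∃ t ≥ t1, ε ≤ v t := by
  obtain ⟨η, hη0, hev⟩ :=
    exists_eventually_abs_deriv_sub_principal_le (γ1 := γ1) (γ2 := γ2) (d0 := d0) (t0 := t0)
      hq hmn hsd hM (κ := γ1 / 2) (by linarith)
  obtain ⟨t1, ht1⟩ :=
    (hev.and ((eventually_ge_atTop t0).and (eventually_ge_atTop 1))).exists_forall_of_atTop
  refine ⟨η, hη0, t1, (ht1 t1 le_rfl).2.1, fun δ ⟨hδ0, _⟩ v hv hv1 => ?_⟩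
  by_contra! hsmall
  have hdiff : ∀ t ≥ t1, DifferentiableAt ℝ v t := fun t ht => hv.differentiableAt (ht1 t ht).2.1
  have hderiv : ∀ t ≥ t1, γ1 / 2 * (t ^ (-(m:ℝ)/(q:ℝ)) * v t ^ s) ≤ deriv v t := fun t ht => by
    linarith [(abs_le.1 ((ht1 t ht).1 v hv (hsmall t ht).le)).1]
  have hlow : ∀ t ≥ t1, δ ≤ v t := by
    refine fun t ht => le_image_of_deriv_pos_of_eq hdiff (fun t ht hvt => ?_) hv1.ge ht
    have htpos : 0 < t := zero_lt_one.trans_le (ht1 t ht).2.2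
    exact (hderiv t ht).trans_lt' (by rw [hvt]; positivity)
  have hgrowth : ∀ t ≥ t1, γ1 / 2 * δ ^ s / t ≤ deriv v t := by
    intro t ht
    have ht1' : 1 ≤ t := (ht1 t ht).2.2
    have hexp : (-1:ℝ) ≤ -(m:ℝ)/q := by
      rw [neg_div, neg_le_neg_iff, div_le_one (by exact_mod_cast hq)]
      exact_mod_cast hmq
    calc γ1 / 2 * δ ^ s / t = γ1 / 2 * (t ^ (-1:ℝ) * δ ^ s) := by rw [rpow_neg_one]; ring
      _ ≤ γ1 / 2 * (t ^ (-(m:ℝ)/(q:ℝ)) * v t ^ s) := by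
        gcongr
        exact hlow t ht
      _ ≤ deriv v t := hderiv t ht
  have hunbounded := tendsto_atTop_of_div_le_deriv (by positivity)
    (zero_lt_one.trans_le (ht1 t1 le_rfl).2.2) hdiff hgrowth
  obtain ⟨t, hvt, ht⟩ := ((hunbounded.eventually_gt_atTop d0).and
    (eventually_ge_atTop t0)).exists
  exact (hv.1 t ht).2.not_gt hvt

end Admissible

theorem stability_instability_s_le_d_general
    (q m n s d : ℕ) (hq : 0 < q) (hmn : m < n) (hsd : s ≤ d)
    (γ1 γ2 d0 t0 M : ℝ) (hM : 0 < M) :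
    (γ1 < 0 →
      ∀ ε ∈ Set.Ioc (0:ℝ) d0, ∃ δ > 0, ∃ t1 ≥ t0,
        ∀ v : ℝ → ℝ, IsAdmissible2 q m n s d γ1 γ2 d0 t0 M v → v t1 ≤ δ →
          ∀ t ≥ t1, v t ≤ ε) ∧
    (0 < γ1 → m ≤ q →
      ∃ ε > 0, ∃ t1 ≥ t0, ∀ δ ∈ Set.Ioo (0:ℝ) ε,
        ∀ v : ℝ → ℝ, IsAdmissible2 q m n s d γ1 γ2 d0 t0 M v → v t1 = δ →
          ∃ t ≥ t1, ε ≤ v t) :=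
  ⟨fun hγ1 ε hε => isAdmissible2_stable_of_neg hq hmn hsd hM.le hγ1 ε hε.1,
    fun hγ1 hmq => isAdmissible2_unstable_of_pos hq hmn hsd hM.le hγ1 hmq⟩

/-- the fully nonlinear case with `s ≤ d`: stability when
`γ1 < 0`, instability when `γ1 > 0` and `m ≤ q`. -/
theorem stability_instability_s_le_d
    (q m n s d : ℕ) (hq : 0 < q) (hm : 0 < m) (hmn : m < n)
    (hs : 2 ≤ s) (hd : 2 ≤ d) (hsd : s ≤ d)
    (γ1 γ2 d0 t0 M : ℝ) (hγ1 : γ1 ≠ 0) (hγ2 : γ2 ≠ 0)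
    (hd0 : 0 < d0) (ht0 : 0 < t0) (hM : 0 < M) :
    (γ1 < 0 →
      ∀ ε ∈ Set.Ioc (0:ℝ) d0, ∃ δ > 0, ∃ t1 ≥ t0,
        ∀ v : ℝ → ℝ, IsAdmissible2 q m n s d γ1 γ2 d0 t0 M v → v t1 ≤ δ →
          ∀ t ≥ t1, v t ≤ ε) ∧
    (0 < γ1 → m ≤ q →
      ∃ ε > 0, ∃ t1 ≥ t0, ∀ δ ∈ Set.Ioo (0:ℝ) ε,
        ∀ v : ℝ → ℝ, IsAdmissible2 q m n s d γ1 γ2 d0 t0 M v → v t1 = δ →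
          ∃ t ≥ t1, ε ≤ v t) :=
  stability_instability_s_le_d_general q m n s d hq hmn hsd γ1 γ2 d0 t0 M hM
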